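/- arXiv:2405.14228 — 3 statements merged into one kernel-verified Lean document; each statement's English description precedes it below -/
import Mathlib

section
/- (Averaging bound) Let C ⊆ S_n be a code and t ∈ [n] an integer such that the minimum Kendall-τ distance of C satisfies d_K(C) > C(t,2) = t(t-1)/2. Then |C| ≤ n!/t!. -/
open Equiv Finset

/-- An adjacent transposition in `S_n`. -/
def IsAdjSwap {n : ℕ} (π : Equiv.Perm (Fin n)) : Prop :=
  ∃ (i : Fin n) (h : i.1 + 1 < n), π = Equiv.swap i ⟨i.1 + 1, h⟩

/-- The Kendall-τ distance: the minimum number of adjacent transpositions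
needed to obtain `σ` from `τ`. -/
noncomputable def kendall {n : ℕ} (σ τ : Equiv.Perm (Fin n)) : ℕ :=
  sInf {k | ∃ l : List (Equiv.Perm (Fin n)),
    l.length = k ∧ (∀ π ∈ l, IsAdjSwap π) ∧ σ = τ * l.prod}

/-- The Kendall-τ weight: distance to the identity. -/
noncomputable def kWeight {n : ℕ} (σ : Equiv.Perm (Fin n)) : ℕ := kendall σ 1

/-- The inversion set of a permutation: pairs `(i,j)` with `i > j` and `σ⁻¹ i < σ⁻¹ j`. -/
def inversions {n : ℕ} (σ : Equiv.Perm (Fin n)) : Finset (Fin n × Fin n) :=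
  Finset.univ.filter fun p => p.2 < p.1 ∧ σ⁻¹ p.1 < σ⁻¹ p.2

/-- Minimum Kendall-τ distance of a code. -/
noncomputable def minDist {n : ℕ} (C : Finset (Equiv.Perm (Fin n))) : ℕ :=
  sInf {d | ∃ σ ∈ C, ∃ τ ∈ C, σ ≠ τ ∧ kendall σ τ = d}

lemma inversions_one {n : ℕ} : inversions (1 : Equiv.Perm (Fin n)) = ∅ := by
  ext p
  simp only [inversions, mem_filter, mem_univ, true_and, notMem_empty, iff_false]
  rintro ⟨h1, h2⟩
  simp only [inv_one, Perm.one_apply] at h2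
  exact absurd h2 (not_lt_of_gt h1)

lemma descent_of_ne_one {n : ℕ} {π : Equiv.Perm (Fin n)} (h : π ≠ 1) :
    ∃ a, ∃ (ha : a + 1 < n), π ⟨a + 1, ha⟩ < π ⟨a, Nat.lt_of_succ_lt ha⟩ := by
  by_contra hc
  push_neg at hc
  apply h
  have hstep : ∀ (x y : Fin n), x.val + 1 = y.val → π x < π y := by
    intro x y hxy
    have h := hc x.val (by omega)
    have ex : (⟨x.val, Nat.lt_of_succ_lt (by omega)⟩ : Fin n) = x := by simp
    have ey : (⟨x.val + 1, by omega⟩ : Fin n) = y := by simp [Fin.ext_iff, hxy]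
    rw [ex, ey] at h
    refine lt_of_le_of_ne h ?_
    intro he
    have := π.injective he
    omega
  have key : ∀ (k : ℕ) (x y : Fin n), x.val + k + 1 = y.val → π x < π y := by
    intro k
    induction k with
    | zero => intro x y hxy; exact hstep x y (by omega)
    | succ k ih =>
      intro x y hxy
      exact lt_trans (ih x ⟨y.val - 1, by omega⟩ (by simp; omega))
        (hstep _ y (by simp; omega))
  have hmono : StrictMono π := by
    intro x y hxy
    exact key (y.val - x.val - 1) x y (by omega)
  haveI : WellFoundedLT (Fin n) := Finite.to_wellFoundedLT
  have : ⇑π = id := (hmono.range_inj strictMono_id).1 (by simp [Set.range_eq_univ.2 π.surjective])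
  ext x
  simp [this]

lemma swap_lt_iff {n : ℕ} {u v x y : Fin n} (huv : u.val + 1 = v.val)
    (h1 : ¬(x = u ∧ y = v)) (h2 : ¬(x = v ∧ y = u)) :
    (Equiv.swap u v x < Equiv.swap u v y ↔ x < y) := by
  have h1' : ¬(x.val = u.val ∧ y.val = v.val) := by simpa [Fin.ext_iff] using h1
  have h2' : ¬(x.val = v.val ∧ y.val = u.val) := by simpa [Fin.ext_iff] using h2
  rw [Equiv.swap_apply_def, Equiv.swap_apply_def]
  split_ifs <;> simp only [Fin.lt_def, Fin.ext_iff] at * <;> omega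

lemma inversions_mul_swap {n : ℕ} (π : Equiv.Perm (Fin n)) (a : ℕ) (ha : a + 1 < n)
    (hdesc : π ⟨a + 1, ha⟩ < π ⟨a, Nat.lt_of_succ_lt ha⟩) :
    inversions (π * Equiv.swap ⟨a, Nat.lt_of_succ_lt ha⟩ ⟨a + 1, ha⟩)
      = (inversions π).erase (π ⟨a, Nat.lt_of_succ_lt ha⟩, π ⟨a + 1, ha⟩) := by
  set u : Fin n := ⟨a, Nat.lt_of_succ_lt ha⟩ with hu
  set v : Fin n := ⟨a + 1, ha⟩ with hv
  have huv : u.val + 1 = v.val := rfl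
  have hultv : u < v := by simp [Fin.lt_def, hu, hv]
  have hinv : ∀ x : Fin n, (π * Equiv.swap u v)⁻¹ x = Equiv.swap u v (π⁻¹ x) := by
    intro x
    simp [mul_inv_rev, Equiv.swap_inv, Equiv.Perm.mul_apply]
  ext ⟨i, j⟩
  simp only [inversions, mem_erase, mem_filter, mem_univ, true_and, hinv, Ne,
    Prod.mk.injEq, not_and]
  constructor
  · rintro ⟨hji, hlt⟩
    have hne1 : ¬(π⁻¹ i = u ∧ π⁻¹ j = v) := by
      rintro ⟨e1, e2⟩
      rw [e1, e2, Equiv.swap_apply_left, Equiv.swap_apply_right] at hlt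
      exact absurd hlt (not_lt_of_gt hultv)
    have hne2 : ¬(π⁻¹ i = v ∧ π⁻¹ j = u) := by
      rintro ⟨e1, e2⟩
      have hi : i = π v := by rw [← e1]; simp
      have hj : j = π u := by rw [← e2]; simp
      rw [hi, hj] at hji
      exact absurd hji (not_lt_of_gt hdesc)
    refine ⟨?_, hji, (swap_lt_iff huv hne1 hne2).mp hlt⟩
    intro hiu hjv
    exact hne1 ⟨by rw [hiu]; simp, by rw [hjv]; simp⟩
  · rintro ⟨hne, hji, hlt⟩
    refine ⟨hji, (swap_lt_iff huv ?_ ?_).mpr hlt⟩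
    · rintro ⟨e1, e2⟩
      exact hne (by rw [← e1]; simp) (by rw [← e2]; simp)
    · rintro ⟨e1, e2⟩
      have : u < v := hultv
      rw [← e1, ← e2] at this
      exact absurd hlt (not_lt_of_gt this)

lemma mem_inversions_of_desc {n : ℕ} (π : Equiv.Perm (Fin n)) (a : ℕ) (ha : a + 1 < n)
    (hdesc : π ⟨a + 1, ha⟩ < π ⟨a, Nat.lt_of_succ_lt ha⟩) :
    (π ⟨a, Nat.lt_of_succ_lt ha⟩, π ⟨a + 1, ha⟩) ∈ inversions π := by
  simp only [inversions, mem_filter, mem_univ, true_and]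
  refine ⟨hdesc, ?_⟩
  simp [Fin.lt_def]

lemma exists_word {n : ℕ} (π : Equiv.Perm (Fin n)) :
    ∃ l : List (Equiv.Perm (Fin n)), l.length = (inversions π).card ∧
      (∀ s ∈ l, IsAdjSwap s) ∧ π = l.prod := by
  generalize hN : (inversions π).card = N
  induction N using Nat.strong_induction_on generalizing π with
  | _ N ih =>
    by_cases h1 : π = 1
    · subst h1
      refine ⟨[], ?_, by simp, by simp⟩
      simp [← hN, inversions_one]
    · obtain ⟨a, ha, hdesc⟩ := descent_of_ne_one h1
      set s : Equiv.Perm (Fin n) := Equiv.swap ⟨a, Nat.lt_of_succ_lt ha⟩ ⟨a + 1, ha⟩ with hs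
      have hmem := mem_inversions_of_desc π a ha hdesc
      have hcard : (inversions (π * s)).card = N - 1 := by
        rw [hs, inversions_mul_swap π a ha hdesc, card_erase_of_mem hmem, hN]
      have hNpos : 1 ≤ N := by
        rw [← hN]
        exact card_pos.mpr ⟨_, hmem⟩
      obtain ⟨l, hl1, hl2, hl3⟩ := ih (N - 1) (by omega) (π * s) hcard
      refine ⟨l ++ [s], ?_, ?_, ?_⟩
      · simp [hl1]; omega
      · intro x hx
        rcases List.mem_append.mp hx with hx | hx
        · exact hl2 x hx
        · simp only [List.mem_singleton] at hx
          subst hx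
          exact ⟨⟨a, Nat.lt_of_succ_lt ha⟩, ha, rfl⟩
      · rw [List.prod_append, List.prod_singleton, ← hl3, mul_assoc, hs,
          Equiv.swap_mul_self, mul_one]

/-- Averaging bound: a code with minimum Kendall-τ distance > C(t,2) has at most n!/t! codewords. -/
theorem stmt10 {n : ℕ} (t : ℕ) (ht1 : 1 ≤ t) (ht2 : t ≤ n)
    (C : Finset (Equiv.Perm (Fin n))) (hC : 2 ≤ C.card)
    (hd : ∀ σ ∈ C, ∀ τ ∈ C, σ ≠ τ → t.choose 2 < kendall σ τ) :
    C.card ≤ n.factorial / t.factorial := by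
  -- key: if two codewords agree on all positions ≥ t, they are equal
  have key : ∀ σ ∈ C, ∀ τ ∈ C, (∀ i : Fin n, t ≤ i.val → σ i = τ i) → σ = τ := by
    intro σ hσ τ hτ hagree
    by_contra hne
    set π : Equiv.Perm (Fin n) := τ⁻¹ * σ with hπ
    have hfix : ∀ i : Fin n, t ≤ i.val → π i = i := by
      intro i hi
      simp only [hπ, Equiv.Perm.mul_apply]
      rw [hagree i hi, show τ⁻¹ (τ i) = i from τ.symm_apply_apply i]
    have hinvfix : ∀ i : Fin n, t ≤ i.val → π⁻¹ i = i := by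
      intro i hi
      apply π.injective
      rw [show π (π⁻¹ i) = i from π.apply_symm_apply i, hfix i hi]
    -- inversions of π only involve indices < t
    have hsmall : ∀ p ∈ inversions π, p.1.val < t ∧ p.2.val < t := by
      rintro ⟨i, j⟩ hp
      simp only [inversions, mem_filter, mem_univ, true_and] at hp
      obtain ⟨hji, hlt⟩ := hp
      have hi : i.val < t := by
        by_contra hit
        push_neg at hit
        have hii : π⁻¹ i = i := hinvfix i hit
        have hjsmall : (π⁻¹ j).val < t := by
          by_contra hjt
          push_neg at hjt
          have := hfix (π⁻¹ j) hjt
          rw [show π (π⁻¹ j) = j from π.apply_symm_apply j] at this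
          rw [← this] at hjt
          -- now t ≤ j.val and t ≤ i.val, both fixed
          have hjj : π⁻¹ j = j := hinvfix j hjt
          rw [hii, hjj] at hlt
          exact absurd hlt (not_lt_of_gt hji)
        rw [hii] at hlt
        have : (π⁻¹ j).val < i.val := lt_of_lt_of_le hjsmall hit
        exact absurd hlt (not_lt_of_gt this)
      exact ⟨hi, lt_trans hji hi⟩
    -- hence at most C(t,2) inversions
    have hcard : (inversions π).card ≤ t.choose 2 := by
      have : (inversions π).card ≤ ((Finset.range t).powersetCard 2).card := by
        apply Finset.card_le_card_of_injOn (fun p => {p.1.val, p.2.val})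
        · rintro ⟨i, j⟩ hp
          obtain ⟨hi, hj⟩ := hsmall _ hp
          simp only [inversions, mem_coe, mem_filter, mem_univ, true_and] at hp
          simp only [Finset.mem_coe]
          rw [Finset.mem_powersetCard]
          constructor
          · intro x hx
            simp only [Finset.mem_insert, Finset.mem_singleton] at hx
            rcases hx with h | h <;> subst h <;> simp [Finset.mem_range, hi, hj]
          · rw [Finset.card_insert_of_notMem (by simp; omega), Finset.card_singleton]
        · rintro ⟨i, j⟩ hp ⟨i', j'⟩ hp' heq
          simp only [inversions, mem_coe, mem_filter, mem_univ, true_and] at hp hp'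
          have heq' : ({i.val, j.val} : Finset ℕ) = {i'.val, j'.val} := heq
          have h1 : i.val ∈ ({i'.val, j'.val} : Finset ℕ) := by
            rw [← heq']; simp
          have h2 : j.val ∈ ({i'.val, j'.val} : Finset ℕ) := by
            rw [← heq']; simp
          have h3 : i'.val ∈ ({i.val, j.val} : Finset ℕ) := by
            rw [heq']; simp
          simp only [Finset.mem_insert, Finset.mem_singleton] at h1 h2 h3
          have hji : j.val < i.val := hp.1
          have hji' : j'.val < i'.val := hp'.1
          have : i.val = i'.val ∧ j.val = j'.val := by omega
          simp only [Prod.mk.injEq, Fin.ext_iff]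
          exact this
      calc (inversions π).card ≤ ((Finset.range t).powersetCard 2).card := this
        _ = t.choose 2 := by rw [Finset.card_powersetCard, Finset.card_range]
    -- kendall σ τ ≤ (inversions π).card
    obtain ⟨l, hl1, hl2, hl3⟩ := exists_word π
    have hk : kendall σ τ ≤ t.choose 2 := by
      have hmem : l.length ∈ {k | ∃ l' : List (Equiv.Perm (Fin n)),
          l'.length = k ∧ (∀ π ∈ l', IsAdjSwap π) ∧ σ = τ * l'.prod} := by
        refine ⟨l, rfl, hl2, ?_⟩
        rw [← hl3, hπ, ← mul_assoc, mul_inv_cancel, one_mul]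
      calc kendall σ τ ≤ l.length := Nat.sInf_le hmem
        _ = (inversions π).card := hl1
        _ ≤ t.choose 2 := hcard
    exact absurd hk (not_le_of_gt (hd σ hσ τ hτ hne))
  -- injection into embeddings Fin (n-t) ↪ Fin n
  set F : Equiv.Perm (Fin n) → (Fin (n - t) ↪ Fin n) := fun σ =>
    ⟨fun i => σ ⟨t + i.val, by omega⟩, by
      intro a b hab
      have := σ.injective hab
      simp only [Fin.mk.injEq] at this
      exact Fin.ext (by omega)⟩ with hF
  have hinj : Set.InjOn F C := by
    intro σ hσ τ hτ heq
    apply key σ hσ τ hτ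
    intro i hi
    have : F σ ⟨i.val - t, by omega⟩ = F τ ⟨i.val - t, by omega⟩ := by rw [heq]
    simp only [hF, Function.Embedding.coeFn_mk] at this
    have hieq : (⟨t + (i.val - t), by omega⟩ : Fin n) = i := Fin.ext (by simp; omega)
    have this' : σ ⟨t + (i.val - t), by omega⟩ = τ ⟨t + (i.val - t), by omega⟩ := this
    rwa [hieq] at this'
  have hcardle : C.card ≤ Fintype.card (Fin (n - t) ↪ Fin n) := by
    rw [← Finset.card_univ]
    exact Finset.card_le_card_of_injOn F (fun _ _ => mem_univ _) hinj
  calc C.card ≤ Fintype.card (Fin (n - t) ↪ Fin n) := hcardle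
    _ = n.descFactorial (n - t) := by
        rw [Fintype.card_embedding_eq, Fintype.card_fin, Fintype.card_fin]
    _ = n.factorial / t.factorial := by
        rw [Nat.descFactorial_eq_div (by omega)]
        have hnt : n - (n - t) = t := by omega
        rw [hnt]
end

section
/- Let C ⊆ S_n be a t-balanced code. Then for every i ∈ [n], the set C^{1,i} = {σ ∈ C : σ(1) = i} has cardinality exactly |C|/n, and the puncturing C^{1,i}|_{S_1} ⊆ S_{n-1} (with S_1 = [n] \ {1}) is a t-balanced code in S_{n-1}. -/
open Equiv Finset

theorem Equiv.Perm.apply_inv_self {α : Type*} (f : Perm α) (x : α) : f (f⁻¹ x) = x :=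
  f.apply_symm_apply x

theorem Equiv.Perm.inv_apply_self {α : Type*} (f : Perm α) (x : α) : f⁻¹ (f x) = x :=
  f.symm_apply_apply x

namespace Aux
variable {m : ℕ}

def Dis (σ τ : Perm (Fin m)) : Finset (Fin m × Fin m) :=
  univ.filter fun p => σ⁻¹ p.1 < σ⁻¹ p.2 ∧ τ⁻¹ p.2 < τ⁻¹ p.1

lemma mem_dis {σ τ : Perm (Fin m)} {p : Fin m × Fin m} :
    p ∈ Dis σ τ ↔ σ⁻¹ p.1 < σ⁻¹ p.2 ∧ τ⁻¹ p.2 < τ⁻¹ p.1 := by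
  simp [Dis]

lemma dis_self (σ : Perm (Fin m)) : Dis σ σ = ∅ := by
  ext p; simp only [mem_dis, Finset.notMem_empty, iff_false, not_and]
  intro h; exact (lt_asymm h)

lemma perm_strictMono_eq_id {f : Perm (Fin m)} (h : StrictMono (f : Fin m → Fin m)) :
    f = 1 := by
  have : (f : Fin m → Fin m) = (1 : Perm (Fin m)) := by
    have hr : Set.range (f : Fin m → Fin m) = Set.range (id : Fin m → Fin m) := by
      simp [Set.range_eq_univ.2 f.surjective]
    have inst : WellFoundedLT (Fin m) := inferInstance
    have := (@StrictMono.range_inj (Fin m) (Fin m) _ _ inst _ id h strictMono_id).mp hr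
    simpa using this
  exact Equiv.ext fun x => congrFun this x

lemma eq_of_dis_empty {σ τ : Perm (Fin m)} (h : Dis σ τ = ∅) : σ = τ := by
  have hm : StrictMono (fun k => τ⁻¹ (σ k)) := by
    intro k l hkl
    have hne : σ k ≠ σ l := fun e => absurd (σ.injective e) hkl.ne
    rcases lt_trichotomy (τ⁻¹ (σ k)) (τ⁻¹ (σ l)) with h1 | h1 | h1
    · exact h1
    · exact absurd (τ.injective (by simpa using congrArg τ h1)) hne
    · exfalso
      have : (σ k, σ l) ∈ Dis σ τ := by
        rw [mem_dis]; simpa using ⟨hkl, h1⟩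
      simp [h] at this
  have : (τ⁻¹ * σ : Perm (Fin m)) = 1 := perm_strictMono_eq_id (f := τ⁻¹ * σ) hm
  have := congrArg (τ * ·) this
  simpa [mul_assoc] using this

end Aux

namespace Aux
variable {m : ℕ}

lemma adj_swap_lt {j : Fin m} (h : j.1 + 1 < m) (p q : Fin m)
    (h1 : ¬(p = j ∧ q = ⟨j.1 + 1, h⟩)) (h2 : ¬(q = j ∧ p = ⟨j.1 + 1, h⟩)) :
    Equiv.swap j ⟨j.1 + 1, h⟩ p < Equiv.swap j ⟨j.1 + 1, h⟩ q ↔ p < q := by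
  rcases j with ⟨j, hjm⟩
  rcases p with ⟨p, hp⟩
  rcases q with ⟨q, hq⟩
  simp only [Equiv.swap_apply_def, Fin.lt_def, Fin.mk.injEq, not_and] at *
  split_ifs <;> simp_all <;> omega

lemma eq_of_comp_strictMono {σ τ : Perm (Fin m)}
    (hm : StrictMono (fun k => τ⁻¹ (σ k))) : σ = τ := by
  have h1 : (τ⁻¹ * σ : Perm (Fin m)) = 1 := perm_strictMono_eq_id (f := τ⁻¹ * σ) hm
  have := congrArg (τ * ·) h1
  simpa [mul_assoc] using this

lemma strictMono_of_adj {f : Fin m → Fin m}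
    (h : ∀ (j : ℕ) (hj : j + 1 < m), f ⟨j, by omega⟩ < f ⟨j + 1, hj⟩) : StrictMono f := by
  have key : ∀ (k : ℕ) (hk : k < m) (p : Fin m), p.1 < k → f p < f ⟨k, hk⟩ := by
    intro k
    induction k with
    | zero => intro _ _ hp; omega
    | succ k ih =>
      intro hk p hp
      rcases Nat.lt_or_ge p.1 k with h' | h'
      · exact (ih (by omega) p h').trans (h k hk)
      · have hpk : p = ⟨k, by omega⟩ := by
          apply Fin.ext
          show p.1 = k
          omega
        rw [hpk]; exact h k hk
  intro p q hpq
  have := key q.1 q.2 p hpq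
  simpa using this

lemma exists_descent {σ τ : Perm (Fin m)} (h : σ ≠ τ) :
    ∃ (j : Fin m) (hj : j.1 + 1 < m), τ⁻¹ (σ ⟨j.1 + 1, hj⟩) < τ⁻¹ (σ j) := by
  by_contra hc
  push_neg at hc
  apply h
  apply eq_of_comp_strictMono
  apply strictMono_of_adj
  intro j hj
  have h1 := hc ⟨j, by omega⟩ hj
  have h2 : σ (⟨j, by omega⟩ : Fin m) ≠ σ ⟨j + 1, hj⟩ := by
    intro e
    have := σ.injective e
    simp [Fin.ext_iff] at this
  have h3 : τ⁻¹ (σ (⟨j, by omega⟩ : Fin m)) ≠ τ⁻¹ (σ ⟨j + 1, hj⟩) := by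
    intro e; exact h2 (τ⁻¹.injective e)
  exact lt_of_le_of_ne h1 h3

end Aux

namespace Aux
variable {m : ℕ}

lemma inv_mul_swap_apply (σ : Perm (Fin m)) {j j' : Fin m} (x : Fin m) :
    (σ * Equiv.swap j j')⁻¹ x = Equiv.swap j j' (σ⁻¹ x) := by
  rw [mul_inv_rev, Equiv.swap_inv]
  rfl

lemma dis_mul_swap_subset (σ τ : Perm (Fin m)) {s : Perm (Fin m)} (hs : IsAdjSwap s) :
    ∃ p, Dis (σ * s) τ ⊆ insert p (Dis σ τ) := by
  obtain ⟨j, hj, rfl⟩ := hs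
  set j' : Fin m := ⟨j.1 + 1, hj⟩ with hj'
  refine ⟨(σ j', σ j), ?_⟩
  rintro ⟨x, y⟩ hxy
  rw [mem_dis] at hxy
  rw [inv_mul_swap_apply, inv_mul_swap_apply] at hxy
  obtain ⟨hlt, hτ⟩ := hxy
  rw [Finset.mem_insert, mem_dis]
  by_cases c1 : σ⁻¹ x = j ∧ σ⁻¹ y = j'
  · exfalso
    rw [c1.1, c1.2, Equiv.swap_apply_left, Equiv.swap_apply_right] at hlt
    exact absurd hlt (by simp [Fin.lt_def, hj'])
  · by_cases c2 : σ⁻¹ y = j ∧ σ⁻¹ x = j'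
    · left
      have hx : x = σ j' := by rw [← c2.2]; simp
      have hy : y = σ j := by rw [← c2.1]; simp
      rw [hx, hy]
    · right
      refine ⟨?_, hτ⟩
      rwa [adj_swap_lt hj _ _ c1 c2] at hlt

lemma dis_card_le_length (τ : Perm (Fin m)) (l : List (Perm (Fin m)))
    (hl : ∀ π ∈ l, IsAdjSwap π) : (Dis (τ * l.prod) τ).card ≤ l.length := by
  induction l using List.reverseRecOn with
  | nil => simp [dis_self]
  | append_singleton l s ih =>
    have hs : IsAdjSwap s := hl s (by simp)
    have hl' : ∀ π ∈ l, IsAdjSwap π := fun π hπ => hl π (by simp [hπ])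
    obtain ⟨p, hp⟩ := dis_mul_swap_subset (τ * l.prod) τ hs
    have h1 : τ * (l ++ [s]).prod = (τ * l.prod) * s := by
      rw [List.prod_append, List.prod_singleton, mul_assoc]
    calc (Dis (τ * (l ++ [s]).prod) τ).card
        = (Dis ((τ * l.prod) * s) τ).card := by rw [h1]
      _ ≤ (insert p (Dis (τ * l.prod) τ)).card := Finset.card_le_card hp
      _ ≤ (Dis (τ * l.prod) τ).card + 1 := Finset.card_insert_le _ _
      _ ≤ l.length + 1 := by exact Nat.add_le_add_right (ih hl') 1
      _ = (l ++ [s]).length := by simp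

end Aux

namespace Aux
variable {m : ℕ}

lemma dis_mul_swap_erase (σ τ : Perm (Fin m)) {j : Fin m} (hj : j.1 + 1 < m)
    (hd : τ⁻¹ (σ ⟨j.1 + 1, hj⟩) < τ⁻¹ (σ j)) :
    Dis (σ * Equiv.swap j ⟨j.1 + 1, hj⟩) τ = (Dis σ τ).erase (σ j, σ ⟨j.1 + 1, hj⟩) := by
  set j' : Fin m := ⟨j.1 + 1, hj⟩ with hj'
  have hjj' : j < j' := by simp [Fin.lt_def, hj']
  ext ⟨x, y⟩
  rw [Finset.mem_erase, mem_dis, mem_dis, inv_mul_swap_apply, inv_mul_swap_apply]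
  by_cases c1 : σ⁻¹ x = j ∧ σ⁻¹ y = j'
  · have hx : x = σ j := by rw [← c1.1]; simp
    have hy : y = σ j' := by rw [← c1.2]; simp
    constructor
    · rintro ⟨hlt, -⟩
      rw [c1.1, c1.2, Equiv.swap_apply_left, Equiv.swap_apply_right] at hlt
      exact absurd hlt (not_lt.2 hjj'.le)
    · rintro ⟨hne, -⟩
      exact absurd (by rw [hx, hy]) hne
  · by_cases c2 : σ⁻¹ y = j ∧ σ⁻¹ x = j'
    · have hx : x = σ j' := by rw [← c2.2]; simp
      have hy : y = σ j := by rw [← c2.1]; simp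
      constructor
      · rintro ⟨-, hτ⟩
        rw [hx, hy] at hτ
        exact absurd hτ (not_lt.2 hd.le)
      · rintro ⟨-, hlt, -⟩
        rw [c2.1, c2.2] at hlt
        exact absurd hlt (not_lt.2 hjj'.le)
    · rw [adj_swap_lt hj _ _ c1 c2]
      constructor
      · rintro ⟨hlt, hτ⟩
        refine ⟨?_, hlt, hτ⟩
        intro e
        have ex : x = σ j := congrArg Prod.fst e
        have ey : y = σ j' := congrArg Prod.snd e
        exact c1 ⟨by rw [ex]; simp, by rw [ey]; simp⟩
      · rintro ⟨-, hlt, hτ⟩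
        exact ⟨hlt, hτ⟩

lemma exists_list (τ : Perm (Fin m)) :
    ∀ (c : ℕ) (σ : Perm (Fin m)), (Dis σ τ).card = c →
      ∃ l : List (Perm (Fin m)), l.length = c ∧ (∀ π ∈ l, IsAdjSwap π) ∧ σ = τ * l.prod := by
  intro c
  induction c with
  | zero =>
    intro σ h
    have := eq_of_dis_empty (Finset.card_eq_zero.mp h)
    exact ⟨[], rfl, by simp, by simp [this]⟩
  | succ c ih =>
    intro σ hc
    have hne : σ ≠ τ := by
      rintro rfl; rw [dis_self] at hc; simp at hc
    obtain ⟨j, hj, hd⟩ := exists_descent hne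
    set j' : Fin m := ⟨j.1 + 1, hj⟩ with hj'
    set s : Perm (Fin m) := Equiv.swap j j' with hs
    have hmem : (σ j, σ j') ∈ Dis σ τ := by
      rw [mem_dis]
      refine ⟨by simpa using (by simp [Fin.lt_def, hj'] : j < j'), by simpa using hd⟩
    have hcard : (Dis (σ * s) τ).card = c := by
      rw [hs, dis_mul_swap_erase σ τ hj hd, Finset.card_erase_of_mem hmem, hc]
      omega
    obtain ⟨l, hlen, hadj, heq⟩ := ih (σ * s) hcard
    refine ⟨l ++ [s], by simp [hlen], ?_, ?_⟩
    · intro π hπ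
      rcases List.mem_append.mp hπ with h' | h'
      · exact hadj π h'
      · rw [List.mem_singleton.mp h']
        exact ⟨j, hj, rfl⟩
    · have hss : s * s = 1 := by rw [hs]; exact Equiv.swap_mul_self _ _
      have : σ = (σ * s) * s := by rw [mul_assoc, hss, mul_one]
      rw [this, heq, List.prod_append, List.prod_singleton, mul_assoc]

theorem kendall_eq_dis (σ τ : Perm (Fin m)) : kendall σ τ = (Dis σ τ).card := by
  obtain ⟨l, hlen, hadj, heq⟩ := exists_list τ _ σ rfl
  apply le_antisymm
  · apply Nat.sInf_le
    exact ⟨l, hlen, hadj, heq⟩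
  · apply le_csInf
    · exact ⟨_, l, hlen, hadj, heq⟩
    rintro k ⟨l', hlen', hadj', heq'⟩
    calc (Dis σ τ).card = (Dis (τ * l'.prod) τ).card := by rw [← heq']
      _ ≤ l'.length := dis_card_le_length τ l' hadj'
      _ = k := hlen'

lemma kendall_self (σ : Perm (Fin m)) : kendall σ σ = 0 := by
  rw [kendall_eq_dis, dis_self]; rfl

end Aux

namespace Aux
variable {m : ℕ}

lemma dis_card_le_choose {t : ℕ} (σ τ : Perm (Fin m))
    (hagree : ∀ p : Fin m, t ≤ p.1 → σ p = τ p) :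
    (Dis σ τ).card ≤ t.choose 2 := by
  classical
  have hval : ∀ x : Fin m, t ≤ (σ⁻¹ x).1 → τ⁻¹ x = σ⁻¹ x := by
    intro x hx
    apply τ.injective
    rw [Equiv.Perm.apply_inv_self, ← hagree (σ⁻¹ x) hx, Equiv.Perm.apply_inv_self]
  have hval2 : ∀ x : Fin m, (σ⁻¹ x).1 < t → (τ⁻¹ x).1 < t := by
    intro x hx
    by_contra hge
    push_neg at hge
    have h1 : σ (τ⁻¹ x) = x := by
      rw [hagree (τ⁻¹ x) hge, Equiv.Perm.apply_inv_self]
    have : σ⁻¹ x = τ⁻¹ x := by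
      apply σ.injective; rw [Equiv.Perm.apply_inv_self, h1]
    rw [this] at hx; omega
  have key : ∀ p ∈ Dis σ τ, (σ⁻¹ p.1).1 < t ∧ (σ⁻¹ p.2).1 < t := by
    rintro ⟨x, y⟩ hp
    rw [mem_dis] at hp
    dsimp only at hp ⊢
    obtain ⟨h1, h2⟩ := hp
    have hy : (σ⁻¹ y).1 < t := by
      by_contra hgy
      push_neg at hgy
      have hyy := hval y hgy
      rcases lt_or_ge (σ⁻¹ x).1 t with hx | hx
      · have hx2 := hval2 x hx
        rw [hyy] at h2
        rw [Fin.lt_def] at h2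
        omega
      · have hxx := hval x hx
        rw [hyy, hxx] at h2
        rw [Fin.lt_def] at h1 h2
        omega
    refine ⟨?_, hy⟩
    rw [Fin.lt_def] at h1; omega
  have hmaps : ∀ p ∈ Dis σ τ,
      ({(σ⁻¹ p.1).1, (σ⁻¹ p.2).1} : Finset ℕ) ∈ (Finset.range t).powersetCard 2 := by
    intro p hp
    obtain ⟨h1, h2⟩ := key p hp
    have hp' := hp
    rw [mem_dis] at hp'
    rw [Finset.mem_powersetCard]
    constructor
    · intro u hu
      rcases Finset.mem_insert.mp hu with h | h
      · rw [Finset.mem_range, h]; exact h1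
      · rw [Finset.mem_singleton.mp h, Finset.mem_range]; exact h2
    · apply Finset.card_pair
      have := hp'.1
      rw [Fin.lt_def] at this; omega
  have hinj : ∀ p ∈ Dis σ τ, ∀ q ∈ Dis σ τ,
      ({(σ⁻¹ p.1).1, (σ⁻¹ p.2).1} : Finset ℕ) = {(σ⁻¹ q.1).1, (σ⁻¹ q.2).1} → p = q := by
    rintro ⟨x1, y1⟩ hp ⟨x2, y2⟩ hq he
    rw [mem_dis] at hp hq
    have ho1 : (σ⁻¹ x1).1 < (σ⁻¹ y1).1 := by have := hp.1; rwa [Fin.lt_def] at this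
    have ho2 : (σ⁻¹ x2).1 < (σ⁻¹ y2).1 := by have := hq.1; rwa [Fin.lt_def] at this
    have m1 : (σ⁻¹ x1).1 ∈ ({(σ⁻¹ x2).1, (σ⁻¹ y2).1} : Finset ℕ) := by
      rw [← he]; simp
    have m2 : (σ⁻¹ y1).1 ∈ ({(σ⁻¹ x2).1, (σ⁻¹ y2).1} : Finset ℕ) := by
      rw [← he]; simp
    have m3 : (σ⁻¹ x2).1 ∈ ({(σ⁻¹ x1).1, (σ⁻¹ y1).1} : Finset ℕ) := by
      rw [he]; simp
    simp only [Finset.mem_insert, Finset.mem_singleton] at m1 m2 m3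
    have hx : (σ⁻¹ x1).1 = (σ⁻¹ x2).1 ∧ (σ⁻¹ y1).1 = (σ⁻¹ y2).1 := by omega
    have e1 : x1 = x2 := by
      have := σ⁻¹.injective (Fin.ext hx.1 : σ⁻¹ x1 = σ⁻¹ x2); exact this
    have e2 : y1 = y2 := by
      have := σ⁻¹.injective (Fin.ext hx.2 : σ⁻¹ y1 = σ⁻¹ y2); exact this
    rw [e1, e2]
  calc (Dis σ τ).card ≤ ((Finset.range t).powersetCard 2).card :=
        Finset.card_le_card_of_injOn _ hmaps hinj
    _ = t.choose 2 := by rw [Finset.card_powersetCard, Finset.card_range]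

lemma code_card_le {t : ℕ} (ht : t ≤ m) (D : Finset (Perm (Fin m)))
    (hd : ∀ π ∈ D, ∀ ρ ∈ D, π ≠ ρ → t.choose 2 < kendall π ρ) :
    D.card ≤ m.factorial / t.factorial := by
  classical
  have hΦinj : ∀ σ : Perm (Fin m), Function.Injective
      (fun k : Fin (m - t) => σ ⟨t + k.1, by omega⟩) := by
    intro σ a b hab
    have := σ.injective hab
    rw [Fin.mk.injEq] at this
    exact Fin.ext (by omega)
  let Φ : Perm (Fin m) → (Fin (m - t) ↪ Fin m) := fun σ => ⟨_, hΦinj σ⟩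
  have hinj : ∀ σ ∈ D, ∀ ρ ∈ D, Φ σ = Φ ρ → σ = ρ := by
    intro σ hσ ρ hρ h
    by_contra hne
    have hagree : ∀ p : Fin m, t ≤ p.1 → σ p = ρ p := by
      intro p hp
      have hpe : p = ⟨t + (p.1 - t), by omega⟩ := Fin.ext (by simp; omega)
      have := DFunLike.congr_fun h (⟨p.1 - t, by omega⟩ : Fin (m - t))
      simpa [Φ, ← hpe] using this
    have h1 := hd σ hσ ρ hρ hne
    have h2 : kendall σ ρ ≤ t.choose 2 := by
      rw [kendall_eq_dis]; exact dis_card_le_choose σ ρ hagree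
    omega
  calc D.card ≤ (Finset.univ : Finset (Fin (m - t) ↪ Fin m)).card :=
        Finset.card_le_card_of_injOn Φ (fun _ _ => Finset.mem_univ _) hinj
    _ = Fintype.card (Fin (m - t) ↪ Fin m) := rfl
    _ = m.descFactorial (m - t) := by
        rw [Fintype.card_embedding_eq, Fintype.card_fin, Fintype.card_fin]
    _ = m.factorial / t.factorial := by
        rw [Nat.descFactorial_eq_div (by omega : m - t ≤ m),
          show m - (m - t) = t from by omega]

end Aux

namespace Aux
variable {n : ℕ}

def IsPunct (σ : Perm (Fin (n + 1))) (π : Perm (Fin n)) : Prop :=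
  ∀ k l : Fin n, π k < π l ↔ σ k.succ < σ l.succ

lemma punct_unique {σ : Perm (Fin (n + 1))} {π π' : Perm (Fin n)}
    (h : IsPunct σ π) (h' : IsPunct σ π') : π = π' := by
  have hm : StrictMono (fun x => π' (π⁻¹ x)) := by
    intro x y hxy
    have h1 : π (π⁻¹ x) < π (π⁻¹ y) := by
      rwa [Equiv.Perm.apply_inv_self, Equiv.Perm.apply_inv_self]
    exact (h' _ _).mpr ((h _ _).mp h1)
  have : (π' * π⁻¹ : Perm (Fin n)) = 1 := perm_strictMono_eq_id (f := π' * π⁻¹) hm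
  have := congrArg (· * π) this
  simpa [mul_assoc] using this.symm

lemma punct_exists (σ : Perm (Fin (n + 1))) : ∃ π : Perm (Fin n), IsPunct σ π := by
  classical
  set s : Finset (Fin (n + 1)) := univ.image (fun k : Fin n => σ k.succ) with hs
  have hinj : Function.Injective (fun k : Fin n => σ k.succ) := by
    intro a b hab
    exact Fin.succ_injective _ (σ.injective hab)
  have hcard : s.card = n := by
    rw [hs, Finset.card_image_of_injective _ hinj, Finset.card_univ, Fintype.card_fin]
  have hmem : ∀ k : Fin n, σ k.succ ∈ s := by
    intro k; rw [hs]; exact Finset.mem_image_of_mem _ (Finset.mem_univ k)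
  let g : Fin n → {x // x ∈ s} := fun k => ⟨σ k.succ, hmem k⟩
  have hginj : Function.Injective g := by
    intro a b hab
    exact hinj (congrArg Subtype.val hab)
  have hgbij : Function.Bijective g := by
    rw [Fintype.bijective_iff_injective_and_card]
    refine ⟨hginj, ?_⟩
    rw [Fintype.card_fin, Fintype.card_coe, hcard]
  let o := s.orderIsoOfFin hcard
  refine ⟨(Equiv.ofBijective g hgbij).trans o.symm.toEquiv, ?_⟩
  intro k l
  show o.symm (g k) < o.symm (g l) ↔ _
  rw [o.symm.lt_iff_lt]
  exact Subtype.mk_lt_mk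

lemma epunct_strictMono {σ : Perm (Fin (n + 1))} {π : Perm (Fin n)} (h : IsPunct σ π) :
    StrictMono (fun x => σ (π⁻¹ x).succ) := by
  intro x y hxy
  have h1 : π (π⁻¹ x) < π (π⁻¹ y) := by
    rwa [Equiv.Perm.apply_inv_self, Equiv.Perm.apply_inv_self]
  exact (h _ _).mp h1

lemma epunct_range {σ : Perm (Fin (n + 1))} {π : Perm (Fin n)} (h : IsPunct σ π) :
    Set.range (fun x => σ (π⁻¹ x).succ) = {x : Fin (n + 1) | x ≠ σ 0} := by
  ext x
  constructor
  · rintro ⟨k, rfl⟩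
    intro e
    exact Fin.succ_ne_zero _ (σ.injective e)
  · intro hx
    have h0 : σ⁻¹ x ≠ 0 := by
      intro e
      apply hx
      rw [← e, Equiv.Perm.apply_inv_self]
    obtain ⟨k, hk⟩ := Fin.exists_succ_eq.mpr h0
    refine ⟨π k, ?_⟩
    show σ (π⁻¹ (π k)).succ = x
    rw [Equiv.Perm.inv_apply_self, hk, Equiv.Perm.apply_inv_self]

lemma epunct_eq {σ τ : Perm (Fin (n + 1))} {π ρ : Perm (Fin n)} (h0 : σ 0 = τ 0)
    (hπ : IsPunct σ π) (hρ : IsPunct τ ρ) :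
    (fun x => σ (π⁻¹ x).succ) = (fun x => τ (ρ⁻¹ x).succ) := by
  have inst : WellFoundedLT (Fin n) := inferInstance
  apply (@StrictMono.range_inj (Fin n) (Fin (n + 1)) _ _ inst _ _
    (epunct_strictMono hπ) (epunct_strictMono hρ)).mp
  rw [epunct_range hπ, epunct_range hρ, h0]

lemma kendall_punct {σ τ : Perm (Fin (n + 1))} {π ρ : Perm (Fin n)} (h0 : σ 0 = τ 0)
    (hπ : IsPunct σ π) (hρ : IsPunct τ ρ) : kendall π ρ = kendall σ τ := by
  rw [kendall_eq_dis, kendall_eq_dis]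
  set e := fun x => σ (π⁻¹ x).succ with he
  have hee := epunct_eq h0 hπ hρ
  have hσe : ∀ x, σ⁻¹ (e x) = (π⁻¹ x).succ := by
    intro x; rw [he]; exact Equiv.Perm.inv_apply_self σ _
  have hτe : ∀ x, τ⁻¹ (e x) = (ρ⁻¹ x).succ := by
    intro x
    rw [he]
    have : e x = τ (ρ⁻¹ x).succ := congrFun hee x
    rw [← he, this]
    exact Equiv.Perm.inv_apply_self τ _
  have hmemiff : ∀ x y : Fin n, (x, y) ∈ Dis π ρ ↔ (e x, e y) ∈ Dis σ τ := by
    intro x y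
    rw [mem_dis, mem_dis]
    dsimp only
    rw [hσe, hσe, hτe, hτe, Fin.succ_lt_succ_iff, Fin.succ_lt_succ_iff]
  apply Finset.card_bij (fun p _ => (e p.1, e p.2))
  · rintro ⟨x, y⟩ hp
    exact (hmemiff x y).mp hp
  · rintro ⟨x1, y1⟩ h1 ⟨x2, y2⟩ h2 he2
    have hx : e x1 = e x2 := congrArg Prod.fst he2
    have hy : e y1 = e y2 := congrArg Prod.snd he2
    have einj := (epunct_strictMono hπ).injective
    rw [Prod.mk.injEq]
    exact ⟨einj hx, einj hy⟩
  · rintro ⟨a, b⟩ hab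
    have hab' := hab
    rw [mem_dis] at hab'
    dsimp only at hab'
    have ha : a ≠ σ 0 := by
      rintro rfl
      have : τ⁻¹ (τ 0) = 0 := Equiv.Perm.inv_apply_self τ 0
      rw [h0, this] at hab'
      exact absurd hab'.2 (by simp)
    have hb : b ≠ σ 0 := by
      rintro rfl
      have : σ⁻¹ (σ 0) = 0 := Equiv.Perm.inv_apply_self σ 0
      rw [this] at hab'
      exact absurd hab'.1 (by simp)
    have hra : a ∈ Set.range e := by rw [he, epunct_range hπ]; exact ha
    have hrb : b ∈ Set.range e := by rw [he, epunct_range hπ]; exact hb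
    obtain ⟨x, hx⟩ := hra
    obtain ⟨y, hy⟩ := hrb
    refine ⟨(x, y), ?_, by rw [hx, hy]⟩
    apply (hmemiff x y).mpr
    rw [hx, hy]
    exact hab

noncomputable def punct (σ : Perm (Fin (n + 1))) : Perm (Fin n) :=
  Classical.choose (punct_exists σ)

lemma punct_spec (σ : Perm (Fin (n + 1))) : IsPunct σ (punct σ) :=
  Classical.choose_spec (punct_exists σ)

end Aux


/-- For a t-balanced code `C ⊆ S_{n+1}`: each first-value class has exactly `|C|/(n+1)`
elements, and the puncturing at the first position of each class is again t-balanced,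
i.e. it has cardinality `n!/t!` and minimum distance `> C(t,2)`. -/
theorem stmt12 {n : ℕ} (t : ℕ) (ht1 : 1 ≤ t) (ht2 : t ≤ n + 1)
    (C : Finset (Equiv.Perm (Fin (n + 1)))) (hC : 2 ≤ C.card)
    (hd : ∀ σ ∈ C, ∀ τ ∈ C, σ ≠ τ → t.choose 2 < kendall σ τ)
    (hsize : C.card = (n + 1).factorial / t.factorial)
    (i : Fin (n + 1)) (D : Finset (Equiv.Perm (Fin n)))
    (hD : ∀ π : Equiv.Perm (Fin n), π ∈ D ↔
      ∃ σ ∈ C, σ 0 = i ∧ ∀ k l : Fin n, (π k < π l ↔ σ k.succ < σ l.succ)) :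
    (C.filter fun σ => σ 0 = i).card = C.card / (n + 1) ∧
      D.card = n.factorial / t.factorial ∧
      ∀ π ∈ D, ∀ ρ ∈ D, π ≠ ρ → t.choose 2 < kendall π ρ := by
  classical
  have htn : t ≤ n := by
    by_contra h
    have ht : t = n + 1 := by omega
    rw [ht, Nat.div_self (Nat.factorial_pos _)] at hsize
    omega
  set B := n.factorial / t.factorial with hB
  have hCB : C.card = (n + 1) * B := by
    rw [hsize, hB, Nat.factorial_succ, Nat.mul_div_assoc _ (Nat.factorial_dvd_factorial htn)]
  have hmemj : ∀ (j : Fin (n + 1)) σ, σ ∈ C.filter (fun σ => σ 0 = j) → σ ∈ C ∧ σ 0 = j := by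
    intro j σ h; rwa [Finset.mem_filter] at h
  have hpinj : ∀ (j : Fin (n + 1)), ∀ σ ∈ C.filter (fun σ => σ 0 = j),
      ∀ τ ∈ C.filter (fun σ => σ 0 = j), Aux.punct σ = Aux.punct τ → σ = τ := by
    intro j σ hσ τ hτ he
    by_contra hne
    have h0 : σ 0 = τ 0 := by rw [(hmemj j σ hσ).2, (hmemj j τ hτ).2]
    have hk : kendall (Aux.punct σ) (Aux.punct τ) = kendall σ τ :=
      Aux.kendall_punct h0 (Aux.punct_spec σ) (Aux.punct_spec τ)
    rw [he, Aux.kendall_self] at hk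
    have := hd σ (hmemj j σ hσ).1 τ (hmemj j τ hτ).1 hne
    omega
  have hclass_le : ∀ j : Fin (n + 1), (C.filter fun σ => σ 0 = j).card ≤ B := by
    intro j
    set E := (C.filter fun σ => σ 0 = j).image Aux.punct with hE
    have hEcard : E.card = (C.filter fun σ => σ 0 = j).card :=
      Finset.card_image_of_injOn (hpinj j)
    have hEd : ∀ π ∈ E, ∀ ρ ∈ E, π ≠ ρ → t.choose 2 < kendall π ρ := by
      intro π hπ ρ hρ hne
      rw [hE, Finset.mem_image] at hπ hρ
      obtain ⟨σ, hσ, rfl⟩ := hπ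
      obtain ⟨τ, hτ, rfl⟩ := hρ
      have hστ : σ ≠ τ := by rintro rfl; exact hne rfl
      have h0 : σ 0 = τ 0 := by rw [(hmemj j σ hσ).2, (hmemj j τ hτ).2]
      rw [Aux.kendall_punct h0 (Aux.punct_spec σ) (Aux.punct_spec τ)]
      exact hd σ (hmemj j σ hσ).1 τ (hmemj j τ hτ).1 hστ
    have hle := Aux.code_card_le htn E hEd
    rw [hB]
    omega
  have hsum : ∑ j : Fin (n + 1), (C.filter fun σ => σ 0 = j).card = C.card :=
    (Finset.card_eq_sum_card_fiberwise (fun σ _ => Finset.mem_univ (σ 0))).symm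
  have hclass_eq : ∀ j : Fin (n + 1), (C.filter fun σ => σ 0 = j).card = B := by
    intro j
    by_contra hne
    have hlt : (C.filter fun σ => σ 0 = j).card < B := lt_of_le_of_ne (hclass_le j) hne
    have hslt : ∑ k : Fin (n + 1), (C.filter fun σ => σ 0 = k).card <
        ∑ _k : Fin (n + 1), B :=
      Finset.sum_lt_sum (fun k _ => hclass_le k) ⟨j, Finset.mem_univ j, hlt⟩
    rw [hsum, Finset.sum_const, Finset.card_univ, Fintype.card_fin, smul_eq_mul, ← hCB] at hslt
    omega
  have hfirst : (C.filter fun σ => σ 0 = i).card = C.card / (n + 1) := by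
    rw [hclass_eq i, hCB, Nat.mul_div_cancel_left _ (Nat.succ_pos n)]
  refine ⟨hfirst, ?_, ?_⟩
  · have hDE : D = (C.filter fun σ => σ 0 = i).image Aux.punct := by
      ext π
      rw [hD, Finset.mem_image]
      constructor
      · rintro ⟨σ, hσ, h0, hp⟩
        exact ⟨σ, Finset.mem_filter.mpr ⟨hσ, h0⟩, Aux.punct_unique (Aux.punct_spec σ) hp⟩
      · rintro ⟨σ, hσ, rfl⟩
        rw [Finset.mem_filter] at hσ
        exact ⟨σ, hσ.1, hσ.2, Aux.punct_spec σ⟩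
    rw [hDE, Finset.card_image_of_injOn (hpinj i), hclass_eq i]
  · intro π hπ ρ hρ hne
    obtain ⟨σ, hσ, h0σ, hpσ⟩ := (hD π).mp hπ
    obtain ⟨τ, hτ, h0τ, hpτ⟩ := (hD ρ).mp hρ
    have h0 : σ 0 = τ 0 := by rw [h0σ, h0τ]
    have hστ : σ ≠ τ := by
      rintro rfl
      exact hne (Aux.punct_unique hpσ hpτ)
    rw [Aux.kendall_punct h0 hpσ hpτ]
    exact hd σ hσ τ hτ hστ
end

section
/- Let C ⊆ S_n (n ≥ 2) be a 2-balanced code, i.e., |C| = n!/2 and minimum Kendall-τ distance d_K(C) ≥ 2. Then C is a left translate of the alternating group: C = σ ∘ A_n for some σ ∈ S_n. -/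
open Equiv Finset

section Aux16

variable {n : ℕ}

private lemma adjSwap_props {π : Equiv.Perm (Fin n)} (h : IsAdjSwap π) :
    Equiv.Perm.sign π = -1 ∧ π * π = 1 ∧ π ≠ 1 := by
  obtain ⟨i, hi, rfl⟩ := h
  have hne : i ≠ (⟨i.1 + 1, hi⟩ : Fin n) := by
    intro he
    have := congrArg Fin.val he
    simp at this
  refine ⟨Equiv.Perm.sign_swap hne, Equiv.swap_mul_self _ _, ?_⟩
  simpa [Equiv.swap_eq_one_iff] using hne

private lemma units_neg_iff (v u : ℤˣ) : v = -u ↔ ¬ v = u := by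
  rcases Int.units_eq_one_or v with rfl | rfl <;>
    rcases Int.units_eq_one_or u with rfl | rfl <;> decide

private lemma swap_mem_adjClosure (a k : ℕ) (h : a + k + 1 < n) :
    Equiv.swap (⟨a, by omega⟩ : Fin n) ⟨a + k + 1, h⟩ ∈
      Subgroup.closure {π : Equiv.Perm (Fin n) | IsAdjSwap π} := by
  induction k with
  | zero => exact Subgroup.subset_closure ⟨⟨a, by omega⟩, h, rfl⟩
  | succ m ih =>
    have h1 : a + m + 1 < n := by omega
    have h2 : a + m + 2 < n := by omega
    set s : Equiv.Perm (Fin n) := Equiv.swap ⟨a + m + 1, h1⟩ ⟨a + m + 2, h2⟩ with hs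
    have hsmem : s ∈ Subgroup.closure {π : Equiv.Perm (Fin n) | IsAdjSwap π} :=
      Subgroup.subset_closure ⟨⟨a + m + 1, h1⟩, h2, rfl⟩
    have key : Equiv.swap (⟨a, by omega⟩ : Fin n) ⟨a + (m + 1) + 1, h⟩
        = s * Equiv.swap (⟨a, by omega⟩ : Fin n) ⟨a + m + 1, h1⟩ * s⁻¹ := by
      rw [← Equiv.swap_apply_apply]
      congr 1
      · rw [hs, Equiv.swap_apply_of_ne_of_ne]
        · intro he; have := congrArg Fin.val he; simp at this; omega
        · intro he; have := congrArg Fin.val he; simp at this; omega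
      · rw [hs, Equiv.swap_apply_left]
        exact Fin.ext (by simp; omega)
    rw [key]
    exact Subgroup.mul_mem _ (Subgroup.mul_mem _ hsmem (ih h1)) (Subgroup.inv_mem _ hsmem)

private lemma swap_mem_adjClosure' (x y : Fin n) (hxy : x.1 < y.1) :
    Equiv.swap x y ∈ Subgroup.closure {π : Equiv.Perm (Fin n) | IsAdjSwap π} := by
  have hx : x = (⟨x.1, x.2⟩ : Fin n) := rfl
  have hy : y = (⟨x.1 + (y.1 - x.1 - 1) + 1, by omega⟩ : Fin n) := Fin.ext (by simp; omega)
  rw [hx, hy]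
  exact swap_mem_adjClosure x.1 (y.1 - x.1 - 1) (by omega)

private lemma adjClosure_top :
    Subgroup.closure {π : Equiv.Perm (Fin n) | IsAdjSwap π} = ⊤ := by
  rw [eq_top_iff, ← Equiv.Perm.closure_isSwap, Subgroup.closure_le]
  rintro σ ⟨x, y, hxy, rfl⟩
  rcases lt_trichotomy x.1 y.1 with h | h | h
  · exact swap_mem_adjClosure' x y h
  · exact absurd (Fin.ext h) hxy
  · rw [Equiv.swap_comm]
    exact swap_mem_adjClosure' y x h

private lemma signcard (hn : 2 ≤ n) (u : ℤˣ) :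
    ((Finset.univ : Finset (Equiv.Perm (Fin n))).filter
      fun σ => Equiv.Perm.sign σ = u).card = n.factorial / 2 := by
  classical
  have hne : (⟨0, by omega⟩ : Fin n) ≠ ⟨1, by omega⟩ := by
    intro he; have := congrArg Fin.val he; simp at this
  set s₀ : Equiv.Perm (Fin n) := Equiv.swap ⟨0, by omega⟩ ⟨1, by omega⟩ with hs₀
  have hsgn : Equiv.Perm.sign s₀ = -1 := Equiv.Perm.sign_swap hne
  have hbij : ∀ v : ℤˣ,
      ((Finset.univ : Finset (Equiv.Perm (Fin n))).filter fun σ => Equiv.Perm.sign σ = v).card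
      = ((Finset.univ : Finset (Equiv.Perm (Fin n))).filter
          fun σ => Equiv.Perm.sign σ = -v).card := by
    intro v
    apply Finset.card_nbij' (i := fun σ => σ * s₀) (j := fun σ => σ * s₀)
    · intro σ hσ
      simp only [mem_coe, mem_filter, mem_univ, true_and] at hσ ⊢
      rw [map_mul, hσ, hsgn, mul_neg_one]
    · intro σ hσ
      simp only [mem_coe, mem_filter, mem_univ, true_and] at hσ ⊢
      rw [map_mul, hσ, hsgn, mul_neg_one, neg_neg]
    · intro σ _; simp [mul_assoc, hs₀]
    · intro σ _; simp [mul_assoc, hs₀]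
  have hpart : ((Finset.univ : Finset (Equiv.Perm (Fin n))).filter
        fun σ => Equiv.Perm.sign σ = 1).card
      + ((Finset.univ : Finset (Equiv.Perm (Fin n))).filter
        fun σ => Equiv.Perm.sign σ = -1).card = n.factorial := by
    have h2 : ((Finset.univ : Finset (Equiv.Perm (Fin n))).filter
        fun σ => Equiv.Perm.sign σ = -1)
        = ((Finset.univ : Finset (Equiv.Perm (Fin n))).filter
          fun σ => ¬ Equiv.Perm.sign σ = 1) := by
      apply Finset.filter_congr; intro σ _
      exact units_neg_iff _ _
    rw [h2, Finset.card_filter_add_card_filter_not, card_univ, Fintype.card_perm,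
      Fintype.card_fin]
  have h1 := hbij 1
  rcases Int.units_eq_one_or u with rfl | rfl
  · omega
  · rw [← h1]; omega

private lemma counting (hn : 2 ≤ n) (C : Finset (Equiv.Perm (Fin n)))
    (hsize : C.card = n.factorial / 2)
    (hind : ∀ σ ∈ C, ∀ π, IsAdjSwap π → σ * π ∉ C)
    (u : ℤˣ) (τ : Equiv.Perm (Fin n)) (hτs : Equiv.Perm.sign τ = -u) (hτ : τ ∉ C)
    {π : Equiv.Perm (Fin n)} (hπ : IsAdjSwap π) : τ * π ∈ C := by
  classical
  set E := C.filter (fun σ => Equiv.Perm.sign σ = u) with hE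
  set O := C.filter (fun σ => Equiv.Perm.sign σ = -u) with hO
  set Od := (Finset.univ : Finset (Equiv.Perm (Fin n))).filter
      (fun σ => Equiv.Perm.sign σ = -u) with hOd
  set T := Od \ O with hT
  set Sf := (Finset.univ : Finset (Equiv.Perm (Fin n))).filter
      (fun π => IsAdjSwap π) with hSf
  have hinner : ∀ s ∈ Sf, (T.filter fun τ' => τ' * s ∈ E) = E.image (fun σ => σ * s) := by
    intro s hs
    have hsA : IsAdjSwap s := (mem_filter.mp hs).2
    obtain ⟨hsgn, hss, -⟩ := adjSwap_props hsA
    ext τ'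
    simp only [mem_filter, mem_sdiff, mem_image, hT, hOd, hO, hE, mem_univ, true_and]
    constructor
    · rintro ⟨⟨hodd, hnot⟩, hin⟩
      exact ⟨τ' * s, hin, by rw [mul_assoc, hss, mul_one]⟩
    · rintro ⟨σ, ⟨hσC, hσs⟩, rfl⟩
      refine ⟨⟨?_, ?_⟩, ?_⟩
      · rw [map_mul, hσs, hsgn, mul_neg_one]
      · rintro ⟨hmem, -⟩
        exact hind σ hσC s hsA hmem
      · rw [mul_assoc, hss, mul_one]; exact ⟨hσC, hσs⟩
  have hOsub : O ⊆ Od := Finset.filter_subset_filter _ (Finset.subset_univ C)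
  have hEO : E.card + O.card = C.card := by
    have h2 : O = C.filter (fun σ => ¬ Equiv.Perm.sign σ = u) := by
      apply Finset.filter_congr; intro σ _; exact units_neg_iff _ _
    rw [hE, h2, Finset.card_filter_add_card_filter_not]
  have hTcard : T.card = E.card := by
    have h1 : T.card = Od.card - O.card := Finset.card_sdiff_of_subset hOsub
    have h2 : Od.card = n.factorial / 2 := signcard hn (-u)
    have h3 : O.card ≤ Od.card := Finset.card_le_card hOsub
    omega
  have hsum : ∑ τ' ∈ T, (Sf.filter fun s => τ' * s ∈ E).card = T.card * Sf.card := by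
    calc ∑ τ' ∈ T, (Sf.filter fun s => τ' * s ∈ E).card
        = ∑ τ' ∈ T, ∑ s ∈ Sf, if τ' * s ∈ E then 1 else 0 :=
          Finset.sum_congr rfl fun τ' _ => Finset.card_filter _ _
      _ = ∑ s ∈ Sf, ∑ τ' ∈ T, if τ' * s ∈ E then 1 else 0 := Finset.sum_comm
      _ = ∑ s ∈ Sf, (T.filter fun τ' => τ' * s ∈ E).card :=
          Finset.sum_congr rfl fun s _ => (Finset.card_filter _ _).symm
      _ = ∑ s ∈ Sf, E.card := by
          refine Finset.sum_congr rfl fun s hs => ?_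
          rw [hinner s hs, Finset.card_image_of_injective _ (fun a b hab => by
            simpa using congrArg (fun z => z * s⁻¹) hab)]
      _ = Sf.card * E.card := by rw [Finset.sum_const, smul_eq_mul]
      _ = T.card * Sf.card := by rw [hTcard, mul_comm]
  have hall : ∀ τ' ∈ T, (Sf.filter fun s => τ' * s ∈ E) = Sf := by
    by_contra hc
    push_neg at hc
    obtain ⟨τ₀, hτ₀, hne0⟩ := hc
    have hlt : (Sf.filter fun s => τ₀ * s ∈ E).card < Sf.card := by
      refine lt_of_le_of_ne (Finset.card_filter_le _ _) fun hcc => hne0 ?_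
      exact Finset.eq_of_subset_of_card_le (Finset.filter_subset _ _) (le_of_eq hcc.symm)
    have hstrict := Finset.sum_lt_sum
      (f := fun τ' => (Sf.filter fun s => τ' * s ∈ E).card)
      (g := fun _ => Sf.card)
      (fun i _ => Finset.card_filter_le _ _) ⟨τ₀, hτ₀, hlt⟩
    rw [hsum, Finset.sum_const, smul_eq_mul] at hstrict
    exact lt_irrefl _ hstrict
  have hτT : τ ∈ T := by
    simp only [hT, hOd, hO, Finset.mem_sdiff, mem_filter, mem_univ, true_and]
    exact ⟨hτs, fun h => hτ h.1⟩
  have hπSf : π ∈ Sf := by simp [hSf, hπ]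
  have hmem : π ∈ Sf.filter fun s => τ * s ∈ E := by rw [hall τ hτT]; exact hπSf
  exact (Finset.mem_filter.mp ((Finset.mem_filter.mp hmem).2)).1

end Aux16

/-- Every 2-balanced code is a left translate `σ ∘ A_n` of the alternating group. -/
theorem stmt16 (n : ℕ) (hn : 2 ≤ n) (C : Finset (Equiv.Perm (Fin n)))
    (hcard : 2 ≤ C.card) (hsize : C.card = n.factorial / 2)
    (hd : ∀ σ ∈ C, ∀ τ ∈ C, σ ≠ τ → 2 ≤ kendall σ τ) :
    ∃ σ : Equiv.Perm (Fin n),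
      C = (Finset.univ.filter fun π : Equiv.Perm (Fin n) => Equiv.Perm.sign π = 1).image
            (fun π => σ * π) := by
  classical
  have hind : ∀ σ ∈ C, ∀ π, IsAdjSwap π → σ * π ∉ C := by
    intro σ hσ π hπ hmem
    obtain ⟨-, -, hne1⟩ := adjSwap_props hπ
    have hne : σ * π ≠ σ := fun h => hne1 (mul_left_cancel (by rw [h, mul_one]))
    have h2 := hd (σ * π) hmem σ hσ hne
    have h1 : kendall (σ * π) σ ≤ 1 := by
      apply Nat.sInf_le
      exact ⟨[π], rfl, by simpa using hπ, by simp⟩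
    omega
  set Ev := (Finset.univ : Finset (Equiv.Perm (Fin n))).filter
      (fun σ => Equiv.Perm.sign σ = 1) with hEv
  have hEvcard : Ev.card = n.factorial / 2 := signcard hn 1
  by_cases hO : ∀ σ ∈ C, Equiv.Perm.sign σ = 1
  · refine ⟨1, ?_⟩
    have hsub : C ⊆ Ev := fun σ hσ => Finset.mem_filter.mpr ⟨Finset.mem_univ σ, hO σ hσ⟩
    have hCE : C = Ev := Finset.eq_of_subset_of_card_le hsub (by rw [hEvcard, hsize])
    rw [hCE]
    ext τ; simp
  by_cases hE : ∀ σ ∈ C, Equiv.Perm.sign σ = -1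
  · obtain ⟨ρ, hρ⟩ := Finset.card_pos.mp (by omega : 0 < C.card)
    refine ⟨ρ, ?_⟩
    have hρs : Equiv.Perm.sign ρ = -1 := hE ρ hρ
    have hsub : C ⊆ Ev.image (fun π => ρ * π) := by
      intro τ hτ
      refine Finset.mem_image.mpr ⟨ρ⁻¹ * τ, ?_, by group⟩
      simp only [hEv, mem_filter, mem_univ, true_and, map_mul, map_inv, hρs, hE τ hτ]
      decide
    have hcard' : (Ev.image fun π => ρ * π).card = n.factorial / 2 := by
      rw [Finset.card_image_of_injective _ (mul_right_injective ρ), hEvcard]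
    exact Finset.eq_of_subset_of_card_le hsub (by rw [hsize, hcard'])
  exfalso
  push_neg at hO hE
  obtain ⟨ρ, hρC, hρ1⟩ := hO
  obtain ⟨σe, hσeC, hσe1⟩ := hE
  have hρs : Equiv.Perm.sign ρ = -1 := by
    rcases Int.units_eq_one_or (Equiv.Perm.sign ρ) with h | h
    · exact absurd h hρ1
    · exact h
  have hσes : Equiv.Perm.sign σe = 1 := by
    rcases Int.units_eq_one_or (Equiv.Perm.sign σe) with h | h
    · exact h
    · exact absurd h hσe1
  have step : ∀ x y : Equiv.Perm (Fin n), IsAdjSwap y →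
      ((Equiv.Perm.sign x = 1 → ρ * x ∈ C) ∧ (Equiv.Perm.sign x = -1 → ρ * x ∉ C)) →
      ((Equiv.Perm.sign (x * y) = 1 → ρ * (x * y) ∈ C) ∧
        (Equiv.Perm.sign (x * y) = -1 → ρ * (x * y) ∉ C)) := by
    intro x y hy ih
    obtain ⟨hysgn, hyy, -⟩ := adjSwap_props hy
    constructor
    · intro hxy1
      have hx : Equiv.Perm.sign x = -1 := by
        rcases Int.units_eq_one_or (Equiv.Perm.sign x) with h | h
        · rw [map_mul, h, hysgn] at hxy1; exact absurd hxy1 (by decide)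
        · exact h
      have hnotC : ρ * x ∉ C := ih.2 hx
      have hsgnτ : Equiv.Perm.sign (ρ * x) = -(-1) := by
        rw [map_mul, hρs, hx]; decide
      have hres := counting hn C hsize hind (-1) (ρ * x) hsgnτ hnotC hy
      rwa [mul_assoc] at hres
    · intro hxy1
      have hx : Equiv.Perm.sign x = 1 := by
        rcases Int.units_eq_one_or (Equiv.Perm.sign x) with h | h
        · exact h
        · rw [map_mul, h, hysgn] at hxy1; exact absurd hxy1 (by decide)
      have hC : ρ * x ∈ C := ih.1 hx
      have hres := hind (ρ * x) hC y hy
      rwa [mul_assoc] at hres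
  have main : ∀ π : Equiv.Perm (Fin n),
      (Equiv.Perm.sign π = 1 → ρ * π ∈ C) ∧ (Equiv.Perm.sign π = -1 → ρ * π ∉ C) := by
    intro π
    have hπtop : π ∈ Subgroup.closure {π : Equiv.Perm (Fin n) | IsAdjSwap π} := by
      rw [adjClosure_top]; trivial
    induction hπtop using Subgroup.closure_induction_right with
    | one =>
      refine ⟨fun _ => by simpa using hρC, fun h1 => ?_⟩
      rw [map_one] at h1; exact absurd h1 (by decide)
    | mul_right x hx y hy ihx => exact step x y hy ihx
    | mul_inv_cancel x hx y hy ihx =>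
      have hyy : y⁻¹ = y := by obtain ⟨i, h, rfl⟩ := hy; simp
      rw [hyy]; exact step x y hy ihx
  have hsub : Ev.image (fun π => ρ * π) ⊆ C := by
    intro τ hτ
    obtain ⟨π, hπ, rfl⟩ := Finset.mem_image.mp hτ
    exact (main π).1 (Finset.mem_filter.mp hπ).2
  have hcardim : (Ev.image fun π => ρ * π).card = C.card := by
    rw [Finset.card_image_of_injective _ (mul_right_injective ρ), hEvcard, hsize]
  have hCeq : Ev.image (fun π => ρ * π) = C :=
    Finset.eq_of_subset_of_card_le hsub (le_of_eq hcardim.symm)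
  rw [← hCeq] at hσeC
  obtain ⟨π, hπ, hπe⟩ := Finset.mem_image.mp hσeC
  have hπs : Equiv.Perm.sign π = 1 := (Finset.mem_filter.mp hπ).2
  rw [← hπe, map_mul, hρs, hπs] at hσes
  exact absurd hσes (by decide)
end
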